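/- Let m ≥ 3 be odd, h(x) = g(1/2+x) − 1/2 with g(x) = Σ_{k=(m+1)/2}^{m} C(m,k) x^k (1−x)^{m−k}, and γ = m C(m−1,(m−1)/2) 2^{−(m−1)}. Fix α ≥ 0. Then the sequence n ↦ h^{(n)}(α γ^{−n}) (defined for n large enough that α γ^{−n} ≤ 1/2) is nonincreasing in n and bounded below by 0; hence the limit L(α) := lim_{n→∞} h^{(n)}(α γ^{−n}) exists. -/

import Mathlib

/-- The majority polynomial: probability that `Bin(m,x) ≥ (m+1)/2`. -/
noncomputable def majPoly (m : ℕ) (x : ℝ) : ℝ :=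
  ∑ k ∈ Finset.Icc ((m + 1) / 2) m, (m.choose k : ℝ) * x ^ k * (1 - x) ^ (m - k)

/-- `h(x) = g(1/2 + x) − 1/2`, the recentered majority polynomial. -/
noncomputable def majH (m : ℕ) (x : ℝ) : ℝ := majPoly m (1/2 + x) - 1/2

/-- `γ(m) = m · C(m−1,(m−1)/2) · 2^{−(m−1)}`. -/
noncomputable def gammaMaj (m : ℕ) : ℝ :=
  (m : ℝ) * ((m - 1).choose ((m - 1) / 2) : ℝ) / 2 ^ (m - 1)

/-!
Write `m = 2k + 1`. The derivative identity for Bernstein polynomials telescopes over the upper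
half of the row, giving `g'(x) = m C(2k,k) xᵏ(1-x)ᵏ`, i.e. `h'(x) = γ(1 - 4x²)ᵏ ∈ [0, γ]` on
`[-1/2, 1/2]`. With `h(0) = 0` and `h(1/2) = 1/2`, `h` is a monotone self-map of `[0, 1/2]` with
`h(x) ≤ γx`, so `h^[n+1](α/γⁿ⁺¹) = h^[n](h(α/γⁿ⁺¹)) ≤ h^[n](α/γⁿ)` by monotonicity of `h^[n]`.
Since `γ > 1`, eventually `α/γⁿ ≤ 1/2`, and from then on the sequence is nonincreasing and
nonnegative, hence convergent.
-/

open Set Filter Topology Polynomial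

section Iterate

variable {α : Type*} [Preorder α] {f : α → α} {s : Set α}

theorem MonotoneOn.iterate_of_mapsTo (hf : MonotoneOn f s) (hs : MapsTo f s s) (n : ℕ) :
    MonotoneOn f^[n] s := by
  induction n with
  | zero => exact monotoneOn_id
  | succ n ih => rw [Function.iterate_succ]; exact ih.comp hf hs

theorem MonotoneOn.iterate_succ_le_of_le (hf : MonotoneOn f s) (hs : MapsTo f s s) {x y : α}
    (hx : x ∈ s) (hy : y ∈ s) (hxy : f x ≤ y) (n : ℕ) : f^[n + 1] x ≤ f^[n] y := by
  rw [Function.iterate_succ_apply]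
  exact hf.iterate_of_mapsTo hs n (hs hx) hy hxy

end Iterate

theorem exists_tendsto_of_eventually_antitone {α : Type*} [ConditionallyCompleteLinearOrder α]
    [TopologicalSpace α] [OrderTopology α] {u : ℕ → α} {n₀ : ℕ} {b : α}
    (hu : ∀ n ≥ n₀, u (n + 1) ≤ u n) (hb : ∀ n ≥ n₀, b ≤ u n) :
    ∃ L, Tendsto u atTop (𝓝 L) := by
  have hanti : Antitone fun j => u (j + n₀) :=
    antitone_nat_of_succ_le fun j => by
      rw [Nat.add_right_comm]; exact hu (j + n₀) (Nat.le_add_left _ _)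
  have hbdd : BddBelow (range fun j => u (j + n₀)) :=
    ⟨b, by rintro _ ⟨j, rfl⟩; exact hb (j + n₀) (Nat.le_add_left _ _)⟩
  exact ⟨_, (tendsto_add_atTop_iff_nat n₀).1 (tendsto_atTop_ciInf hanti hbdd)⟩

theorem derivative_sum_bernsteinPolynomial_Ico (R : Type*) [CommRing R] {a n : ℕ} (ha : a ≤ n) :
    derivative (∑ ν ∈ Finset.Ico a (n + 1), bernsteinPolynomial R (n + 1) (ν + 1)) =
      (n + 1) * bernsteinPolynomial R n a := by
  simp only [derivative_sum, bernsteinPolynomial.derivative_succ_aux, ← Finset.mul_sum]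
  have htel : ∑ ν ∈ Finset.Ico a (n + 1),
      (bernsteinPolynomial R n ν - bernsteinPolynomial R n (ν + 1)) =
        bernsteinPolynomial R n a - bernsteinPolynomial R n (n + 1) := by
    rw [← neg_sub (bernsteinPolynomial R n (n + 1)),
      ← Finset.sum_Ico_sub (f := bernsteinPolynomial R n) (by omega), ← Finset.sum_neg_distrib]
    simp only [neg_sub]
  rw [htel, bernsteinPolynomial.eq_zero_of_lt R (Nat.lt_succ_self n), sub_zero]

theorem majPoly_eq_eval (k : ℕ) (x : ℝ) :
    majPoly (2 * k + 1) x =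
      (∑ ν ∈ Finset.Ico k (2 * k + 1), bernsteinPolynomial ℝ (2 * k + 1) (ν + 1)).eval x := by
  rw [majPoly, eval_finsetSum, Finset.sum_Ico_add' (fun ν => eval x (bernsteinPolynomial ℝ _ ν)),
    show (2 * k + 1 + 1) / 2 = k + 1 by omega, ← Finset.Ico_add_one_right_eq_Icc]
  simp [bernsteinPolynomial]

theorem gammaMaj_two_mul_add_one (k : ℕ) :
    gammaMaj (2 * k + 1) = (2 * k + 1) * (2 * k).choose k / 4 ^ k := by
  rw [gammaMaj, Nat.add_sub_cancel, Nat.mul_div_cancel_left k two_pos, pow_mul]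
  push_cast
  norm_num

theorem one_lt_gammaMaj {k : ℕ} (hk : 1 ≤ k) : 1 < gammaMaj (2 * k + 1) := by
  have h : 4 ^ k < (2 * k + 1) * (2 * k).choose k :=
    calc 4 ^ k ≤ 2 * k * (2 * k).choose k := Nat.four_pow_le_two_mul_self_mul_centralBinom k hk
      _ < (2 * k + 1) * (2 * k).choose k :=
        Nat.mul_lt_mul_of_pos_right (Nat.lt_succ_self _) (Nat.choose_pos (by omega))
  rw [gammaMaj_two_mul_add_one, one_lt_div (by positivity)]
  exact_mod_cast h

theorem majH_hasDerivAt (k : ℕ) (x : ℝ) :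
    HasDerivAt (majH (2 * k + 1)) (gammaMaj (2 * k + 1) * (1 - 4 * x ^ 2) ^ k) x := by
  set P := ∑ ν ∈ Finset.Ico k (2 * k + 1), bernsteinPolynomial ℝ (2 * k + 1) (ν + 1)
  have hp := (P.hasDerivAt (1 / 2 + x)).comp x ((hasDerivAt_id x).const_add (1 / 2))
  have hP : majH (2 * k + 1) = fun y => P.eval (1 / 2 + y) - 1 / 2 := by
    ext y; rw [majH, majPoly_eq_eval]
  rw [hP]
  refine (hp.sub_const (1 / 2 : ℝ)).congr_deriv ?_
  rw [derivative_sum_bernsteinPolynomial_Ico ℝ (by omega : k ≤ 2 * k), gammaMaj_two_mul_add_one]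
  simp only [bernsteinPolynomial, eval_mul, eval_pow, eval_sub, eval_add, eval_one, eval_X,
    eval_natCast, show 2 * k - k = k by omega]
  have hsq : (1 / 2 + x) ^ k * (1 - (1 / 2 + x)) ^ k = (1 - 4 * x ^ 2) ^ k / 4 ^ k := by
    rw [← mul_pow, ← div_pow]; ring_nf
  push_cast
  linear_combination ((2 * k + 1) * ((2 * k).choose k : ℝ)) * hsq

theorem Nat.sum_Icc_choose_upper_halfway (k : ℕ) :
    ∑ j ∈ Finset.Icc (k + 1) (2 * k + 1), (2 * k + 1).choose j = 4 ^ k := by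
  have h := Finset.sum_range_add_sum_Ico (fun j => (2 * k + 1).choose j)
    (by omega : k + 1 ≤ 2 * k + 1 + 1)
  rw [Nat.sum_range_choose_halfway, Nat.sum_range_choose, pow_succ, pow_mul] at h
  rw [← Finset.Ico_add_one_right_eq_Icc]
  norm_num at h
  omega

theorem majH_zero (k : ℕ) : majH (2 * k + 1) 0 = 0 := by
  have hterm : ∀ j ∈ Finset.Icc (k + 1) (2 * k + 1),
      ((2 * k + 1).choose j : ℝ) * (1 / 2) ^ j * (1 - 1 / 2) ^ (2 * k + 1 - j) =
        (2 * k + 1).choose j / 2 ^ (2 * k + 1) := by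
    intro j hj
    rw [show (1 : ℝ) - 1 / 2 = 1 / 2 by norm_num, mul_assoc, ← pow_add,
      Nat.add_sub_cancel' (Finset.mem_Icc.1 hj).2, one_div_pow, mul_one_div]
  rw [majH, add_zero, majPoly, show (2 * k + 1 + 1) / 2 = k + 1 by omega,
    Finset.sum_congr rfl hterm, ← Finset.sum_div, ← Nat.cast_sum, Nat.sum_Icc_choose_upper_halfway,
    pow_succ, pow_mul]
  push_cast
  field_simp
  norm_num

theorem majH_half (k : ℕ) : majH (2 * k + 1) (1 / 2) = 1 / 2 := by
  rw [majH, majPoly_eq_eval]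
  norm_num [eval_finsetSum, bernsteinPolynomial.eval_at_1, show k ≤ 2 * k by omega]

theorem gammaMaj_nonneg (m : ℕ) : 0 ≤ gammaMaj m := by
  unfold gammaMaj; positivity

theorem majH_deriv_mem_Icc (k : ℕ) {x : ℝ} (hx : x ∈ Icc (-(1 / 2)) (1 / 2)) :
    gammaMaj (2 * k + 1) * (1 - 4 * x ^ 2) ^ k ∈ Icc 0 (gammaMaj (2 * k + 1)) := by
  have h0 : 0 ≤ 1 - 4 * x ^ 2 := by nlinarith [hx.1, hx.2]
  have h1 : 1 - 4 * x ^ 2 ≤ 1 := by nlinarith [sq_nonneg x]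
  exact ⟨mul_nonneg (gammaMaj_nonneg _) (pow_nonneg h0 k),
    mul_le_of_le_one_right (gammaMaj_nonneg _) (pow_le_one₀ h0 h1)⟩

theorem majH_monotoneOn (k : ℕ) : MonotoneOn (majH (2 * k + 1)) (Icc 0 (1 / 2)) :=
  monotoneOn_of_hasDerivWithinAt_nonneg (convex_Icc _ _)
    (fun x _ => (majH_hasDerivAt k x).continuousAt.continuousWithinAt)
    (fun x _ => (majH_hasDerivAt k x).hasDerivWithinAt)
    (fun _ hx => (majH_deriv_mem_Icc k (Icc_subset_Icc (by norm_num) le_rfl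
      (interior_subset hx))).1)

theorem majH_le_gammaMaj_mul (k : ℕ) {x : ℝ} (hx : x ∈ Icc 0 (1 / 2)) :
    majH (2 * k + 1) x ≤ gammaMaj (2 * k + 1) * x := by
  have hlip := (convex_Icc (0 : ℝ) (1 / 2)).norm_image_sub_le_of_norm_hasDerivWithin_le
    (fun y _ => (majH_hasDerivAt k y).hasDerivWithinAt)
    (fun y hy => by
      obtain ⟨h0, hγ⟩ := majH_deriv_mem_Icc k (Icc_subset_Icc (by norm_num) le_rfl hy)
      rwa [Real.norm_eq_abs, abs_of_nonneg h0])
    (x := 0) (by norm_num) hx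
  rw [majH_zero, sub_zero, sub_zero, Real.norm_eq_abs, Real.norm_eq_abs,
    abs_of_nonneg hx.1] at hlip
  exact (le_abs_self _).trans hlip

theorem majH_mapsTo (k : ℕ) : MapsTo (majH (2 * k + 1)) (Icc 0 (1 / 2)) (Icc 0 (1 / 2)) := by
  simpa only [majH_zero, majH_half] using (majH_monotoneOn k).mapsTo_Icc

theorem majH_iterates_converge (m : ℕ) (hm : Odd m) (hm3 : 3 ≤ m) (α : ℝ) (hα : 0 ≤ α) :
    ∃ n₀ : ℕ,
      (∀ n ≥ n₀, α / gammaMaj m ^ n ≤ 1/2) ∧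
      (∀ n ≥ n₀, (majH m)^[n + 1] (α / gammaMaj m ^ (n + 1)) ≤ (majH m)^[n] (α / gammaMaj m ^ n)) ∧
      (∀ n ≥ n₀, 0 ≤ (majH m)^[n] (α / gammaMaj m ^ n)) ∧
      ∃ L : ℝ, Filter.Tendsto (fun n : ℕ => (majH m)^[n] (α / gammaMaj m ^ n))
        Filter.atTop (nhds L) := by
  obtain ⟨k, rfl⟩ := hm
  set h := majH (2 * k + 1)
  set γ := gammaMaj (2 * k + 1)
  have hγ : 1 < γ := one_lt_gammaMaj (by omega)
  obtain ⟨n₀, hn₀⟩ : ∃ n₀, ∀ n ≥ n₀, α / γ ^ n ≤ 1 / 2 :=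
    eventually_atTop.1 <| (tendsto_const_nhds.div_atTop (tendsto_pow_atTop_atTop_of_one_lt hγ))
      |>.eventually (ge_mem_nhds (by norm_num : (0 : ℝ) < 1 / 2))
  have hmem : ∀ n ≥ n₀, α / γ ^ n ∈ Icc 0 (1 / 2) :=
    fun n hn => ⟨div_nonneg hα (pow_pos (by linarith) n).le, hn₀ n hn⟩
  have hdec : ∀ n ≥ n₀, h^[n + 1] (α / γ ^ (n + 1)) ≤ h^[n] (α / γ ^ n) := by
    intro n hn
    have hmem' := hmem (n + 1) (by omega)
    refine (majH_monotoneOn k).iterate_succ_le_of_le (majH_mapsTo k) hmem' (hmem n hn) ?_ n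
    calc h (α / γ ^ (n + 1)) ≤ γ * (α / γ ^ (n + 1)) := majH_le_gammaMaj_mul k hmem'
      _ = α / γ ^ n := by field_simp; ring
  have hnonneg : ∀ n ≥ n₀, 0 ≤ h^[n] (α / γ ^ n) :=
    fun n hn => ((majH_mapsTo k).iterate n (hmem n hn)).1
  exact ⟨n₀, hn₀, hdec, hnonneg, exists_tendsto_of_eventually_antitone hdec hnonneg⟩
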